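/- For any two points 𝐳, 𝐰 of the bidisk, the equidistant hypersurface E(𝐳,𝐰) = {𝐱 : ρ(𝐱,𝐳) = ρ(𝐱,𝐰)} is a connected subset of the bidisk. -/

import Mathlib

/-!
Write `f(x) = d(x, z₁)² - d(x, w₁)²` on the first factor. Then `E(𝐳, 𝐰)` is the fibre product
`{(x₁, x₂) : f(x₁) = g(x₂)}` with `g(x₂) = d(x₂, w₂)² - d(x₂, z₂)²`, so it suffices that when
`z₁ ≠ w₁` the level sets of `f` are curves depending continuously on the level: then `E(𝐳, 𝐰)` is a
continuous image of `ℝ × ℍ`.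

After an isometry, `z₁ = e^a i` and `w₁ = e^b i` with `a < b`. In Fermi coordinates `(t, s)` along
the imaginary axis, `cosh d = cosh s · cosh (t - a)`, so on the curve at distance `s` from the axis
`f = φ(t - a) - φ(t - b)` with `φ(u) = arcosh (cosh s · cosh u)²`. This `φ` is strictly convex and
grows like `u²`, so `f` is a strictly increasing bijection in `t`; its inverse is the continuous
parametrization of the level sets.
-/

open UpperHalfPlane

noncomputable section

/-- The bidisk `ℍ × ℍ` with the `ℓ²` product metric. -/
abbrev Bidisk : Type := WithLp 2 (UpperHalfPlane × UpperHalfPlane)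

open Real Set Filter Topology
open scoped MatrixGroups

lemma StrictConvexOn.strictMono_sub_comp_sub {φ : ℝ → ℝ} (hφ : StrictConvexOn ℝ univ φ)
    {a b : ℝ} (hab : a < b) : StrictMono fun t => φ (t - a) - φ (t - b) := by
  intro t₁ t₂ ht
  have h₁ := hφ.secant_strict_mono (a := t₁ - b) (x := t₁ - a) (y := t₂ - a) trivial trivial
    trivial (by linarith) (by linarith) (by linarith)
  have h₂ := hφ.secant_strict_mono (a := t₂ - a) (x := t₁ - b) (y := t₂ - b) trivial trivial
    trivial (by linarith) (by linarith) (by linarith)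
  rw [← neg_div_neg_eq, neg_sub, neg_sub] at h₂
  rw [← neg_div_neg_eq (φ (t₂ - b) - _), neg_sub, neg_sub] at h₂
  have := h₁.trans h₂
  rw [show t₁ - a - (t₁ - b) = b - a by ring, show t₂ - a - (t₂ - b) = b - a by ring] at this
  simpa using (div_lt_div_iff_of_pos_right (sub_pos.2 hab)).1 this

/-- For `t ≥ b + 1`, the difference quotient `(φ (t - a) - φ (t - b)) / (b - a)` is at least the
secant slope of `φ` on `[0, t - b]`, which is at least `t - b - φ 0`. -/
lemma ConvexOn.tendsto_sub_comp_sub_atTop {φ : ℝ → ℝ} (hφ : ConvexOn ℝ univ φ)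
    (hsq : ∀ v, v ^ 2 ≤ φ v) {a b : ℝ} (hab : a < b) :
    Tendsto (fun t => φ (t - a) - φ (t - b)) atTop atTop := by
  have hq : 0 < b - a := sub_pos.2 hab
  refine tendsto_atTop_mono' _ ?_ <|
    ((tendsto_id.atTop_add (tendsto_const_nhds (x := -(b + φ 0)))).const_mul_atTop hq)
  filter_upwards [eventually_ge_atTop (b + 1)] with t ht
  have hslope := hφ.slope_mono_adjacent (x := 0) (y := t - b) (z := t - a) trivial trivial
    (by linarith) (by linarith)
  rw [show t - a - (t - b) = b - a by ring, sub_zero, le_div_iff₀ hq] at hslope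
  have h0 : 0 ≤ φ 0 := by simpa using hsq 0
  have : t - b - φ 0 ≤ (φ (t - b) - φ 0) / (t - b) := by
    rw [le_div_iff₀ (by linarith)]
    nlinarith [hsq (t - b)]
  simp only [id]
  nlinarith

lemma ConvexOn.tendsto_sub_comp_sub_atBot {φ : ℝ → ℝ} (hφ : ConvexOn ℝ univ φ)
    (hsq : ∀ v, v ^ 2 ≤ φ v) (heven : ∀ v, φ (-v) = φ v) {a b : ℝ} (hab : a < b) :
    Tendsto (fun t => φ (t - a) - φ (t - b)) atBot atBot := by
  have h := (hφ.tendsto_sub_comp_sub_atTop hsq (neg_lt_neg hab)).comp tendsto_neg_atBot_atTop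
  refine (tendsto_neg_atTop_atBot.comp h).congr fun t => ?_
  simp only [Function.comp_apply, sub_neg_eq_add, neg_sub]
  rw [← heven (t - a), ← heven (t - b)]
  ring_nf

lemma exists_continuous_rightInverse_of_strictMono {P : Type*} [TopologicalSpace P]
    {F : ℝ × P → ℝ} (hF : Continuous F) (hmono : ∀ p, StrictMono fun t => F (t, p))
    (hsurj : ∀ p, Function.Surjective fun t => F (t, p)) :
    ∃ τ : ℝ × P → ℝ, Continuous τ ∧ ∀ v p, F (τ (v, p), p) = v := by
  choose τ hτ using fun (q : ℝ × P) => hsurj q.2 q.1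
  replace hτ : ∀ v p, F (τ (v, p), p) = v := fun v p => hτ (v, p)
  refine ⟨τ, continuous_iff_continuousAt.2 fun ⟨v₀, p₀⟩ =>
    tendsto_order.2 ⟨fun a ha => ?_, fun b hb => ?_⟩, hτ⟩
  · have : F (a, p₀) < v₀ := hτ v₀ p₀ ▸ hmono p₀ ha
    filter_upwards [(hF.comp (continuous_const.prodMk continuous_snd)).continuousAt.eventually_lt
      continuousAt_fst this] with ⟨v, p⟩ hq
    exact (hmono p).lt_iff_lt.1 (by rwa [hτ v p])
  · have : v₀ < F (b, p₀) := hτ v₀ p₀ ▸ hmono p₀ hb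
    filter_upwards [continuousAt_fst.eventually_lt
      (hF.comp (continuous_const.prodMk continuous_snd)).continuousAt this] with ⟨v, p⟩ hq
    exact (hmono p).lt_iff_lt.1 (by rwa [hτ v p])

lemma strictMono_arcosh_sqrt_mul_div {b : ℝ} (hb : 1 < b) :
    StrictMono fun x => arcosh √(x ^ 2 + b) * (x / √(x ^ 2 + b - 1)) := by
  refine strictMono_of_odd_strictMonoOn_nonneg (fun x => by simp [neg_div]) ?_
  intro x hx y hy hxy
  simp only [mem_Ici] at hx hy
  have hsq : x ^ 2 < y ^ 2 := by nlinarith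
  have hpos : ∀ u : ℝ, 0 < √(u ^ 2 + b - 1) := fun u => sqrt_pos.2 (by nlinarith)
  have harcosh : arcosh √(x ^ 2 + b) < arcosh √(y ^ 2 + b) :=
    (arcosh_lt_arcosh (sqrt_pos.2 (by positivity)) (sqrt_pos.2 (by positivity))).2
      (sqrt_lt_sqrt (by positivity) (by linarith))
  have hdiv : x / √(x ^ 2 + b - 1) < y / √(y ^ 2 + b - 1) := by
    rw [div_lt_div_iff₀ (hpos x) (hpos y)]
    refine lt_of_pow_lt_pow_left₀ 2 (by positivity) ?_
    rw [mul_pow, mul_pow, sq_sqrt (by nlinarith), sq_sqrt (by nlinarith)]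
    nlinarith
  have h0 : 0 < arcosh √(x ^ 2 + b) :=
    arcosh_pos ((lt_sqrt zero_le_one).2 (by nlinarith))
  exact mul_lt_mul'' harcosh hdiv h0.le (div_nonneg hx (hpos x).le)

/-- The squared hyperbolic distance from a point at distance `arcosh C` from a geodesic to the
point of the geodesic at arclength `u` from its foot. -/
def sqDistProfile (C u : ℝ) : ℝ := arcosh (C * cosh u) ^ 2

lemma sqDistProfile_neg (C u : ℝ) : sqDistProfile C (-u) = sqDistProfile C u := by
  rw [sqDistProfile, sqDistProfile, cosh_neg]

lemma sqDistProfile_one : sqDistProfile 1 = fun u => u ^ 2 := by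
  ext u
  rw [sqDistProfile, one_mul, ← cosh_abs, arcosh_cosh (abs_nonneg u), sq_abs]

lemma sq_le_sqDistProfile {C : ℝ} (hC : 1 ≤ C) (u : ℝ) : u ^ 2 ≤ sqDistProfile C u := by
  rw [← sq_abs, sqDistProfile, ← arcosh_cosh (abs_nonneg u), cosh_abs]
  have hcosh := cosh_pos u
  gcongr
  · exact arcosh_nonneg (one_le_cosh u)
  · exact (arcosh_le_arcosh hcosh (by positivity)).2 (le_mul_of_one_le_left hcosh.le hC)

lemma hasDerivAt_sqDistProfile {C : ℝ} (hC : 1 < C) (u : ℝ) :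
    HasDerivAt (sqDistProfile C) (2 * (arcosh √((C * sinh u) ^ 2 + C ^ 2) *
      (C * sinh u / √((C * sinh u) ^ 2 + C ^ 2 - 1)))) u := by
  have hcosh : (C * sinh u) ^ 2 + C ^ 2 = (C * cosh u) ^ 2 := by
    rw [mul_pow, mul_pow, cosh_sq]; ring
  have hgt : 1 < C * cosh u := one_lt_mul_of_lt_of_le hC (one_le_cosh u)
  have h := ((hasDerivAt_arcosh (mem_Ioi.2 hgt)).comp u
    ((hasDerivAt_cosh u).const_mul C)).fun_pow 2
  rw [hcosh, sqrt_sq (by positivity)]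
  refine h.congr_deriv ?_
  simp only [Function.comp_apply]
  ring

lemma strictConvexOn_sqDistProfile {C : ℝ} (hC : 1 ≤ C) :
    StrictConvexOn ℝ univ (sqDistProfile C) := by
  rcases hC.eq_or_lt with rfl | hC
  · rw [sqDistProfile_one]
    exact Even.strictConvexOn_pow even_two two_ne_zero
  have hderiv := hasDerivAt_sqDistProfile hC
  refine StrictMono.strictConvexOn_univ_of_deriv
    (continuous_iff_continuousAt.2 fun u => (hderiv u).continuousAt) ?_
  rw [show deriv (sqDistProfile C) = _ from funext fun u => (hderiv u).deriv]
  have hb : 1 < C ^ 2 := by nlinarith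
  exact (strictMono_mul_left_of_pos two_pos).comp <|
    (strictMono_arcosh_sqrt_mul_div hb).comp (sinh_strictMono.const_mul (by linarith))

structure ParametrizesFibers {X P : Type*} [TopologicalSpace X] [TopologicalSpace P]
    (f : X → ℝ) (Q : ℝ × P → X) : Prop where
  continuous : Continuous Q
  apply_eq : ∀ v p, f (Q (v, p)) = v
  exists_eq : ∀ x, ∃ p, Q (f x, p) = x

namespace ParametrizesFibers

variable {X Y P : Type*} [TopologicalSpace X] [TopologicalSpace Y] [TopologicalSpace P]
  {f : X → ℝ} {Q : ℝ × P → X}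

lemma comp_homeomorph {g : Y → ℝ} {R : ℝ × P → Y} (hR : ParametrizesFibers g R) (e : X ≃ₜ Y) :
    ParametrizesFibers (g ∘ e) (e.symm ∘ R) where
  continuous := e.symm.continuous.comp hR.continuous
  apply_eq v p := by simp [hR.apply_eq]
  exists_eq x := by
    obtain ⟨p, hp⟩ := hR.exists_eq (e x)
    exact ⟨p, by simp [hp]⟩

lemma neg (hQ : ParametrizesFibers f Q) :
    ParametrizesFibers (-f) fun q => Q (-q.1, q.2) where
  continuous := hQ.continuous.comp (continuous_fst.neg.prodMk continuous_snd)
  apply_eq v p := by simp [hQ.apply_eq]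
  exists_eq x := by simpa using hQ.exists_eq x

/-- The fibre product is the image of `P × Y` under `(p, y) ↦ (Q (g y, p), y)`. -/
lemma isConnected_setOf_eq [ConnectedSpace P] [ConnectedSpace Y] (hQ : ParametrizesFibers f Q)
    {g : Y → ℝ} (hg : Continuous g) : IsConnected {x : X × Y | f x.1 = g x.2} := by
  have hrange : range (fun py : P × Y => (Q (g py.2, py.1), py.2)) = {x | f x.1 = g x.2} := by
    ext ⟨x, y⟩
    refine ⟨?_, fun hx => ?_⟩
    · rintro ⟨⟨p, y⟩, h⟩
      simp only [Prod.mk.injEq] at h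
      obtain ⟨rfl, rfl⟩ := h
      exact hQ.apply_eq _ _
    · obtain ⟨p, hp⟩ := hQ.exists_eq x
      exact ⟨(p, y), by simp [← hx.out, hp]⟩
  rw [← hrange]
  exact isConnected_range <|
    (hQ.continuous.comp ((hg.comp continuous_snd).prodMk continuous_fst)).prodMk continuous_snd

end ParametrizesFibers

section SqDistDiff

variable {X Y : Type*} [PseudoMetricSpace X] [PseudoMetricSpace Y]

def sqDistDiff (z w x : X) : ℝ := dist x z ^ 2 - dist x w ^ 2

lemma continuous_sqDistDiff (z w : X) : Continuous (sqDistDiff z w) := by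
  unfold sqDistDiff
  fun_prop

lemma sqDistDiff_swap (z w : X) : sqDistDiff w z = -sqDistDiff z w := by
  ext x
  simp [sqDistDiff]

lemma Isometry.sqDistDiff_apply {e : X → Y} (he : Isometry e) (z w x : X) :
    sqDistDiff (e z) (e w) (e x) = sqDistDiff z w x := by
  simp [sqDistDiff, he.dist_eq]

lemma WithLp.dist_eq_dist_iff_sqDistDiff (x z w : WithLp 2 (X × Y)) :
    dist x z = dist x w ↔ sqDistDiff z.fst w.fst x.fst = sqDistDiff w.snd z.snd x.snd := by
  have hdist (y : WithLp 2 (X × Y)) :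
      dist x y = √(dist x.fst y.fst ^ 2 + dist x.snd y.snd ^ 2) := by
    rw [WithLp.prod_dist_eq_add (by norm_num), sqrt_eq_rpow]
    norm_num
  rw [hdist, hdist, sqrt_inj (by positivity) (by positivity), sqDistDiff, sqDistDiff]
  constructor <;> intro h <;> linarith

lemma ParametrizesFibers.isConnected_setOf_dist_eq {P : Type*} [TopologicalSpace P]
    [ConnectedSpace P] [ConnectedSpace Y] {z w : WithLp 2 (X × Y)} {Q : ℝ × P → X}
    (hQ : ParametrizesFibers (sqDistDiff z.fst w.fst) Q) :
    IsConnected {x : WithLp 2 (X × Y) | dist x z = dist x w} := by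
  have hpre : {x | dist x z = dist x w} = WithLp.homeomorphProd 2 X Y ⁻¹'
      {p | sqDistDiff z.fst w.fst p.1 = sqDistDiff w.snd z.snd p.2} :=
    ext fun x => WithLp.dist_eq_dist_iff_sqDistDiff x z w
  rw [hpre, Homeomorph.isConnected_preimage]
  exact hQ.isConnected_setOf_eq (continuous_sqDistDiff w.snd z.snd)

end SqDistDiff

/-- Fermi coordinates along the imaginary axis: `fermi t s` lies at signed distance `s` from the
axis, on the perpendicular through `exp t • I`. -/
def fermi (t s : ℝ) : ℍ :=
  mk ⟨exp t * sinh s / cosh s, exp t / cosh s⟩ (div_pos (exp_pos t) (cosh_pos s))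

@[simp] lemma fermi_re (t s : ℝ) : (fermi t s).re = exp t * sinh s / cosh s := rfl

@[simp] lemma fermi_im (t s : ℝ) : (fermi t s).im = exp t / cosh s := rfl

lemma continuous_fermi : Continuous fun p : ℝ × ℝ => fermi p.1 p.2 := by
  have : Continuous fun p : ℝ × ℝ => (exp p.1 * sinh p.2 / cosh p.2, exp p.1 / cosh p.2) := by
    fun_prop (disch := exact fun p => (cosh_pos _).ne')
  exact (Complex.equivRealProdCLM.symm.continuous.comp this).upperHalfPlaneMk _

lemma fermi_surjective : Function.Surjective fun p : ℝ × ℝ => fermi p.1 p.2 := by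
  intro x
  have hy := x.im_pos
  set R := √(x.re ^ 2 + x.im ^ 2)
  have hR : 0 < R := sqrt_pos.2 (by positivity)
  have hcosh : cosh (arsinh (x.re / x.im)) = R / x.im := by
    rw [cosh_arsinh, ← sqrt_sq (div_pos hR hy).le, div_pow, div_pow, sq_sqrt (by positivity)]
    congr 1
    field_simp
    ring
  refine ⟨(log R, arsinh (x.re / x.im)), UpperHalfPlane.ext_re_im ?_ ?_⟩
  · rw [fermi_re, sinh_arsinh, hcosh, exp_log hR]
    field_simp
  · rw [fermi_im, hcosh, exp_log hR]
    field_simp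

lemma cosh_dist_fermi (t s : ℝ) {x : ℍ} (hx : x.re = 0) :
    cosh (dist (fermi t s) x) = cosh s * cosh (t - log x.im) := by
  have hy := x.im_pos
  have hcs := cosh_pos s
  rw [cosh_dist, Complex.dist_eq_re_im, sq_sqrt (by positivity), cosh_eq (t - _), exp_sub,
    exp_neg, exp_sub, exp_log hy]
  simp only [coe_re, coe_im, fermi_re, fermi_im, hx]
  field_simp
  linear_combination -(exp t) ^ 2 * cosh_sq s

lemma sqDistDiff_fermi {z w : ℍ} (hz : z.re = 0) (hw : w.re = 0) (t s : ℝ) :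
    sqDistDiff z w (fermi t s) =
      sqDistProfile (cosh s) (t - log z.im) - sqDistProfile (cosh s) (t - log w.im) := by
  simp only [sqDistDiff, sqDistProfile, ← cosh_dist_fermi t s hz, ← cosh_dist_fermi t s hw,
    arcosh_cosh dist_nonneg]

lemma exists_parametrizesFibers_sqDistDiff_of_re_eq_zero {z w : ℍ} (hz : z.re = 0)
    (hw : w.re = 0) (hzw : z.im < w.im) :
    ∃ Q : ℝ × ℝ → ℍ, ParametrizesFibers (sqDistDiff z w) Q := by
  set F : ℝ × ℝ → ℝ := fun p => sqDistDiff z w (fermi p.1 p.2)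
  have hF : Continuous F := (continuous_sqDistDiff z w).comp continuous_fermi
  have hab : log z.im < log w.im := log_lt_log z.im_pos hzw
  have hφ (s : ℝ) := strictConvexOn_sqDistProfile (one_le_cosh s)
  have hmono (s : ℝ) : StrictMono fun t => F (t, s) := by
    simpa only [F, sqDistDiff_fermi hz hw] using (hφ s).strictMono_sub_comp_sub hab
  have hsurj (s : ℝ) : Function.Surjective fun t => F (t, s) := by
    refine (hF.comp (continuous_id.prodMk continuous_const)).surjective ?_ ?_ <;>
      simp only [Function.comp_def, F, sqDistDiff_fermi hz hw]
    · exact (hφ s).convexOn.tendsto_sub_comp_sub_atTop (sq_le_sqDistProfile (one_le_cosh s)) hab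
    · exact (hφ s).convexOn.tendsto_sub_comp_sub_atBot (sq_le_sqDistProfile (one_le_cosh s))
        (sqDistProfile_neg _) hab
  obtain ⟨τ, hτc, hτ⟩ := exists_continuous_rightInverse_of_strictMono hF hmono hsurj
  refine ⟨fun q => fermi (τ q) q.2,
    ⟨continuous_fermi.comp (hτc.prodMk continuous_snd), hτ, fun x => ?_⟩⟩
  obtain ⟨⟨t, s⟩, rfl⟩ := fermi_surjective x
  exact ⟨s, congrArg (fermi · s) ((hmono s).injective (hτ _ s))⟩

lemma exists_re_smul_eq (a u : ℝ) :
    ∃ g : SL(2, ℝ), ∀ x : ℍ, (g • x).re = u - (x.re - a) / ((x.re - a) ^ 2 + x.im ^ 2) := by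
  let g : SL(2, ℝ) := ⟨!![u, -1 - u * a; 1, -a], by simp [Matrix.det_fin_two]; ring⟩
  refine ⟨g, fun x => ?_⟩
  have hx : (x : ℂ) - a ≠ 0 := fun h => x.im_pos.ne' (by simpa using congrArg Complex.im h)
  have h : ((g • x : ℍ) : ℂ) = u - ((x : ℂ) - a)⁻¹ := by
    rw [coe_specialLinearGroup_apply]
    change ((u : ℂ) * x + ((-1 - u * a : ℝ) : ℂ)) / ((1 : ℝ) * x + ((-a : ℝ) : ℂ)) = _
    push_cast
    rw [one_mul, ← sub_eq_add_neg]
    field_simp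
    ring
  rw [← coe_re, h]
  simp only [Complex.sub_re, Complex.ofReal_re, Complex.inv_re, Complex.normSq_apply,
    Complex.sub_im, Complex.ofReal_im, coe_re, coe_im, sub_zero]
  ring

lemma div_eq_of_mem_circle {x : ℍ} {c r : ℝ} (hr : 0 < r)
    (hx : (x.re - c) ^ 2 + x.im ^ 2 = r ^ 2) :
    (x.re - (c - r)) / ((x.re - (c - r)) ^ 2 + x.im ^ 2) = 1 / (2 * r) := by
  have hden : (x.re - (c - r)) ^ 2 + x.im ^ 2 = 2 * r * (x.re - (c - r)) := by
    linear_combination hx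
  have hpos : 0 < x.re - (c - r) := by
    have : 0 < 2 * r * (x.re - (c - r)) := hden ▸ by have := x.im_pos; positivity
    exact pos_of_mul_pos_right this (by positivity)
  rw [hden]
  field_simp

/-- The Möbius map `x ↦ u - 1 / (x - a)` sends the geodesic through `z` and `w`, a half-circle
centred at `c` through `a = c - r` or a vertical line through `a = z.re`, to the imaginary axis. -/
lemma exists_smul_re_eq_zero (z w : ℍ) : ∃ g : SL(2, ℝ), (g • z).re = 0 ∧ (g • w).re = 0 := by
  rcases eq_or_ne z.re w.re with hre | hre
  · obtain ⟨g, hg⟩ := exists_re_smul_eq z.re 0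
    exact ⟨g, by simp [hg], by simp [hg, hre]⟩
  set c := (z.re ^ 2 + z.im ^ 2 - (w.re ^ 2 + w.im ^ 2)) / (2 * (z.re - w.re))
  set r := √((z.re - c) ^ 2 + z.im ^ 2)
  have hr : 0 < r := sqrt_pos.2 (by have := z.im_pos; positivity)
  have hz : (z.re - c) ^ 2 + z.im ^ 2 = r ^ 2 := (sq_sqrt (by positivity)).symm
  have hw : (w.re - c) ^ 2 + w.im ^ 2 = r ^ 2 := by
    have hc : 2 * (z.re - w.re) * c = z.re ^ 2 + z.im ^ 2 - (w.re ^ 2 + w.im ^ 2) :=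
      mul_div_cancel₀ _ (mul_ne_zero two_ne_zero (sub_ne_zero.2 hre))
    linear_combination hz + hc
  obtain ⟨g, hg⟩ := exists_re_smul_eq (c - r) (1 / (2 * r))
  exact ⟨g, by rw [hg, div_eq_of_mem_circle hr hz, sub_self],
    by rw [hg, div_eq_of_mem_circle hr hw, sub_self]⟩

lemma exists_parametrizesFibers_sqDistDiff {z w : ℍ} (h : z ≠ w) :
    ∃ Q : ℝ × ℝ → ℍ, ParametrizesFibers (sqDistDiff z w) Q := by
  obtain ⟨g, hz, hw⟩ := exists_smul_re_eq_zero z w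
  let e : ℍ ≃ᵢ ℍ := IsometryEquiv.constSMul g
  suffices ∃ Q : ℝ × ℝ → ℍ, ParametrizesFibers (sqDistDiff (e z) (e w)) Q by
    obtain ⟨Q, hQ⟩ := this
    have he : sqDistDiff z w = sqDistDiff (e z) (e w) ∘ e :=
      funext fun x => (e.isometry.sqDistDiff_apply z w x).symm
    exact ⟨_, he ▸ hQ.comp_homeomorph e.toHomeomorph⟩
  rcases lt_trichotomy (g • z).im (g • w).im with hlt | heq | hgt
  · exact exists_parametrizesFibers_sqDistDiff_of_re_eq_zero hz hw hlt
  · exact absurd (smul_left_cancel g (UpperHalfPlane.ext_re_im (hz.trans hw.symm) heq)) h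
  · obtain ⟨Q, hQ⟩ := exists_parametrizesFibers_sqDistDiff_of_re_eq_zero hw hz hgt
    rw [sqDistDiff_swap]
    exact ⟨_, hQ.neg⟩

theorem equidistant_hypersurface_connected (z w : Bidisk) :
    IsConnected {x : Bidisk | dist x z = dist x w} := by
  by_cases h₁ : z.fst = w.fst
  · by_cases h₂ : z.snd = w.snd
    · obtain rfl : z = w := WithLp.ofLp_injective 2 (Prod.ext h₁ h₂)
      simpa using (WithLp.homeomorphProd 2 ℍ ℍ).isConnected_preimage.2 isConnected_univ
    · let σ := IsometryEquiv.withLpProdComm 2 ℍ ℍ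
      obtain ⟨Q, hQ⟩ := exists_parametrizesFibers_sqDistDiff h₂
      have h := hQ.isConnected_setOf_dist_eq (z := σ z) (w := σ w)
      rw [← σ.toHomeomorph.isConnected_preimage] at h
      simpa [σ.dist_eq] using h
  · obtain ⟨Q, hQ⟩ := exists_parametrizesFibers_sqDistDiff h₁
    exact hQ.isConnected_setOf_dist_eq
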